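/- Let u, k, ω, σ, λ > 0 and define, for β > 0, M(β) := ½u²k [ sin(ωβ) exp(−½k²σ²(β + λ^{−1}(1 − e^{−λβ}))) − λ ∫₀^∞ exp(−λα − ½k²σ²(α + β + λ^{−1})) sin(ω(α+β)) sinh((k²σ²/(2λ)) e^{−λ(α+β)}) dα ]. Then for every β > 0, |M(β)| ≤ u²k · exp(−½k²σ²β); in particular, M is Lebesgue integrable on (0, ∞). -/

import Mathlib

open MeasureTheory Real Set

/-- The paper's leading-order Stokes'-drift kernel `M(β)` for the elastic dumbbell,
with wave amplitude `u`, wavenumber `k`, frequency `ω`, noise strength `σ`,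
and spring constant `l` (the paper's `λ`). -/
noncomputable def stokesKernel (u k ω σ l β : ℝ) : ℝ :=
  (1 / 2) * u ^ 2 * k *
    (Real.sin (ω * β) *
        Real.exp (-(k ^ 2 * σ ^ 2 / 2) * (β + l⁻¹ * (1 - Real.exp (-(l * β))))) -
      l * ∫ α in Ioi (0 : ℝ),
        Real.exp (-(l * α) - k ^ 2 * σ ^ 2 / 2 * (α + β + l⁻¹)) * Real.sin (ω * (α + β)) *
          Real.sinh (k ^ 2 * σ ^ 2 / (2 * l) * Real.exp (-(l * (α + β)))))

/-!
Write `c = k²σ²/2`. On `α, β ≥ 0` the argument of `sinh` lies in `[0, c/λ]`, so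
`sinh x ≤ eˣ/2` lets its growth be absorbed by the factor `e^{-c/λ}` of the inner integrand,
leaving the bound `e^{-cβ} e^{-λα}/2`. Integrating over `α` gives `e^{-cβ}/(2λ)`, hence
`|M(β)| ≤ ½u²k (1 + ½) e^{-cβ}`, and `e^{-cβ}` is integrable on `(0, ∞)` as soon as `c > 0`.
-/

namespace StokesKernel

noncomputable def innerIntegrand (c l ω β α : ℝ) : ℝ :=
  exp (-(l * α) - c * (α + β + l⁻¹)) * sin (ω * (α + β)) * sinh (c / l * exp (-(l * (α + β))))

noncomputable def driftKernel (c l ω β : ℝ) : ℝ :=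
  sin (ω * β) * exp (-c * (β + l⁻¹ * (1 - exp (-(l * β))))) -
    l * ∫ α in Ioi (0 : ℝ), innerIntegrand c l ω β α

theorem stokesKernel_eq_driftKernel (u k ω σ l : ℝ) :
    stokesKernel u k ω σ l =
      fun β => 1 / 2 * u ^ 2 * k * driftKernel (k ^ 2 * σ ^ 2 / 2) l ω β := by
  ext β
  simp only [stokesKernel, driftKernel, innerIntegrand, div_div]

theorem sinh_le_exp_div_two (x : ℝ) : sinh x ≤ exp x / 2 := by
  rw [sinh_eq]
  linarith [exp_pos (-x)]

variable {c l : ℝ}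

theorem abs_sin_mul_exp_le (ω : ℝ) (hc : 0 ≤ c) (hl : 0 < l) {β : ℝ} (hβ : 0 ≤ β) :
    |sin (ω * β) * exp (-c * (β + l⁻¹ * (1 - exp (-(l * β)))))| ≤ exp (-c * β) := by
  have hmem : 0 ≤ l⁻¹ * (1 - exp (-(l * β))) :=
    mul_nonneg (inv_nonneg.mpr hl.le) (sub_nonneg.mpr (exp_le_one_iff.mpr (by nlinarith)))
  rw [abs_mul, abs_of_pos (exp_pos _)]
  calc |sin (ω * β)| * exp (-c * (β + l⁻¹ * (1 - exp (-(l * β)))))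
      ≤ 1 * exp (-c * β) :=
        mul_le_mul (abs_sin_le_one _) (exp_le_exp.mpr (by nlinarith)) (exp_pos _).le zero_le_one
    _ = exp (-c * β) := one_mul _

theorem abs_innerIntegrand_le (ω : ℝ) (hc : 0 ≤ c) (hl : 0 < l) {β α : ℝ} (hβ : 0 ≤ β)
    (hα : 0 ≤ α) :
    |innerIntegrand c l ω β α| ≤ exp (-c * β) / 2 * exp (-l * α) := by
  set x := c / l * exp (-(l * (α + β)))
  have hx : 0 ≤ x := by positivity
  have hxc : x ≤ c * l⁻¹ :=
    (mul_le_of_le_one_right (by positivity) (exp_le_one_iff.mpr (by nlinarith))).trans_eq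
      (div_eq_mul_inv c l)
  rw [innerIntegrand, abs_mul, abs_mul, abs_of_pos (exp_pos _),
    abs_of_nonneg (sinh_nonneg_iff.mpr hx)]
  calc exp (-(l * α) - c * (α + β + l⁻¹)) * |sin (ω * (α + β))| * sinh x
      ≤ exp (-(l * α) - c * (α + β + l⁻¹)) * 1 * (exp x / 2) := by
        gcongr
        · exact abs_sin_le_one _
        · exact sinh_le_exp_div_two x
    _ = exp (-(l * α) - c * (α + β + l⁻¹) + x) / 2 := by rw [exp_add]; ring
    _ ≤ exp (-c * β + -l * α) / 2 := by gcongr exp ?_ / 2; nlinarith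
    _ = exp (-c * β) / 2 * exp (-l * α) := by rw [exp_add]; ring

theorem continuous_innerIntegrand_uncurry (ω : ℝ) :
    Continuous fun p : ℝ × ℝ => innerIntegrand c l ω p.1 p.2 := by
  unfold innerIntegrand
  fun_prop

theorem abs_integral_innerIntegrand_le (ω : ℝ) (hc : 0 ≤ c) (hl : 0 < l) {β : ℝ} (hβ : 0 ≤ β) :
    |∫ α in Ioi (0 : ℝ), innerIntegrand c l ω β α| ≤ exp (-c * β) / 2 * l⁻¹ := by
  have hexp : ∫ α in Ioi (0 : ℝ), exp (-l * α) = l⁻¹ := by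
    rw [integral_exp_mul_Ioi (neg_lt_zero.mpr hl), mul_zero, exp_zero, neg_div, div_neg, neg_neg,
      one_div]
  calc |∫ α in Ioi (0 : ℝ), innerIntegrand c l ω β α|
      ≤ ∫ α in Ioi (0 : ℝ), exp (-c * β) / 2 * exp (-l * α) := by
        rw [← norm_eq_abs]
        refine norm_integral_le_of_norm_le ((exp_neg_integrableOn_Ioi 0 hl).const_mul _) ?_
        filter_upwards [ae_restrict_mem measurableSet_Ioi] with α hα
        exact abs_innerIntegrand_le ω hc hl hβ hα.le
    _ = exp (-c * β) / 2 * l⁻¹ := by rw [integral_const_mul, hexp]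

theorem abs_driftKernel_le (ω : ℝ) (hc : 0 ≤ c) (hl : 0 < l) {β : ℝ} (hβ : 0 ≤ β) :
    |driftKernel c l ω β| ≤ 3 / 2 * exp (-c * β) := by
  have hmemory : |l * ∫ α in Ioi (0 : ℝ), innerIntegrand c l ω β α| ≤ exp (-c * β) / 2 := by
    rw [abs_mul, abs_of_pos hl]
    calc l * |∫ α in Ioi (0 : ℝ), innerIntegrand c l ω β α|
        ≤ l * (exp (-c * β) / 2 * l⁻¹) := by
          gcongr
          exact abs_integral_innerIntegrand_le ω hc hl hβ
      _ = exp (-c * β) / 2 := by field_simp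
  calc |driftKernel c l ω β|
      ≤ exp (-c * β) + exp (-c * β) / 2 :=
        (abs_sub _ _).trans (add_le_add (abs_sin_mul_exp_le ω hc hl hβ) hmemory)
    _ = 3 / 2 * exp (-c * β) := by ring

theorem integrableOn_driftKernel (ω : ℝ) (hc : 0 < c) (hl : 0 < l) :
    IntegrableOn (driftKernel c l ω) (Ioi 0) := by
  have hmemory : StronglyMeasurable fun β => ∫ α in Ioi (0 : ℝ), innerIntegrand c l ω β α :=
    (continuous_innerIntegrand_uncurry ω).stronglyMeasurable.integral_prod_right'
  have hlocal : Continuous fun β => sin (ω * β) * exp (-c * (β + l⁻¹ * (1 - exp (-(l * β))))) :=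
    by fun_prop
  refine ((exp_neg_integrableOn_Ioi 0 hc).const_mul (3 / 2)).mono' ?_ ?_
  · exact hlocal.aestronglyMeasurable.sub (hmemory.const_mul l).aestronglyMeasurable
  · filter_upwards [ae_restrict_mem measurableSet_Ioi] with β hβ
    exact abs_driftKernel_le ω hc.le hl hβ.le

end StokesKernel

theorem stokesKernel_bound_and_integrable (u k ω σ l : ℝ)
    (hk : 0 < k) (hσ : 0 < σ) (hl : 0 < l) :
    (∀ β, 0 < β →
        |stokesKernel u k ω σ l β| ≤ u ^ 2 * k * Real.exp (-(k ^ 2 * σ ^ 2 / 2) * β)) ∧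
      IntegrableOn (stokesKernel u k ω σ l) (Ioi 0) := by
  have hc : 0 < k ^ 2 * σ ^ 2 / 2 := by positivity
  rw [StokesKernel.stokesKernel_eq_driftKernel]
  refine ⟨fun β hβ => ?_, (StokesKernel.integrableOn_driftKernel ω hc hl).const_mul _⟩
  have hD := StokesKernel.abs_driftKernel_le ω hc.le hl hβ.le
  have hcoef : 0 ≤ 1 / 2 * u ^ 2 * k := by positivity
  rw [abs_mul, abs_of_nonneg hcoef]
  nlinarith [exp_pos (-(k ^ 2 * σ ^ 2 / 2) * β)]
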